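/- The adjusted moments μ̃_k = ∫₀^∞ (x-α)^k · x^α e^{-x}/(x-α)² dx of the Type III X₁-Laguerre weight (with -1 < α < 0) satisfy the recursion μ̃_{k+2} = k·μ̃_{k+1} - α(1-k)·μ̃_k for all k ∈ ℕ₀. -/

import Mathlib

/-!
With `μ̃_k = ∫₀^∞ (x - α)^(k-2) x^α e^(-x) dx`, the recursion is an integration by parts: the
derivative of `(x - α)^(k-1) x^(α+1) e^(-x)` expands, through `x = (x - α) + α`, into
`(k (x - α)^(k-1) + α (k-1) (x - α)^(k-2) - (x - α)^k) x^α e^(-x)`, and the boundary terms vanish,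
at `0` because `α + 1 > 0` and at `∞` because the function is integrable with integrable derivative.
-/

open MeasureTheory Real Set Filter

noncomputable def shiftedGammaIntegrand (α β : ℝ) (j : ℤ) (x : ℝ) : ℝ :=
  (x - α) ^ j * (x ^ β * exp (-x))

noncomputable def shiftedGammaMoment (α β : ℝ) (j : ℤ) : ℝ :=
  ∫ x in Ioi 0, shiftedGammaIntegrand α β j x

section
variable {α β : ℝ}

lemma integrableOn_shiftedGammaIntegrand_natCast (hβ : -1 < β) (n : ℕ) :
    IntegrableOn (shiftedGammaIntegrand α β n) (Ioi 0) := by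
  induction n generalizing β with
  | zero =>
    refine (GammaIntegral_convergent (s := β + 1) (by linarith)).congr_fun (fun x _ => ?_)
      measurableSet_Ioi
    simp [shiftedGammaIntegrand, mul_comm]
  | succ n ih =>
    refine ((ih (β := β + 1) (by linarith)).sub ((ih hβ).const_mul α)).congr_fun
      (fun x hx => ?_) measurableSet_Ioi
    simp only [shiftedGammaIntegrand, Pi.sub_apply, zpow_natCast,
      rpow_add_one (ne_of_gt hx)]
    ring

lemma continuousOn_shiftedGammaIntegrand (hα : α < 0) (j : ℤ) :
    ContinuousOn (shiftedGammaIntegrand α β j) (Ioi 0) := by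
  intro x (hx : 0 < x)
  unfold shiftedGammaIntegrand
  fun_prop (disch := first | exact Or.inl (by linarith) | exact Or.inl hx.ne')

lemma integrableOn_shiftedGammaIntegrand (hα : α < 0) (hβ : -1 < β) (j : ℤ) :
    IntegrableOn (shiftedGammaIntegrand α β j) (Ioi 0) := by
  obtain ⟨n, rfl | rfl⟩ := j.eq_nat_or_neg
  · exact integrableOn_shiftedGammaIntegrand_natCast hβ n
  · have hbound : ∀ x ∈ Ioi (0 : ℝ),
        ‖shiftedGammaIntegrand α β (-n) x‖ ≤ ((-α) ^ n)⁻¹ * shiftedGammaIntegrand α β 0 x := by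
      intro x (hx : 0 < x)
      have hα' : 0 < -α := by linarith
      have hxα : -α ≤ x - α := by linarith
      have hxα_pos : 0 < x - α := by linarith
      simp only [shiftedGammaIntegrand, zpow_neg, zpow_natCast, zpow_zero, one_mul]
      rw [Real.norm_of_nonneg (by positivity)]
      gcongr
    exact ((integrableOn_shiftedGammaIntegrand_natCast hβ 0).const_mul _).mono'
      ((continuousOn_shiftedGammaIntegrand hα _).aestronglyMeasurable measurableSet_Ioi)
      ((ae_restrict_iff' measurableSet_Ioi).2 (.of_forall hbound))

lemma hasDerivAt_shiftedGammaIntegrand_add_one {x : ℝ} (hx : 0 < x) (hxα : x - α ≠ 0) (j : ℤ) :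
    HasDerivAt (shiftedGammaIntegrand α (β + 1) j)
      ((j + β + 1 - α) * shiftedGammaIntegrand α β j x
        + j * α * shiftedGammaIntegrand α β (j - 1) x - shiftedGammaIntegrand α β (j + 1) x) x := by
  have hzpow : HasDerivAt (fun x : ℝ => (x - α) ^ j) (j * (x - α) ^ (j - 1)) x :=
    (hasDerivAt_zpow j (x - α) (.inl hxα)).comp_sub_const x α
  have hrpow : HasDerivAt (fun x : ℝ => x ^ (β + 1)) ((β + 1) * x ^ β) x := by
    simpa using hasDerivAt_rpow_const (p := β + 1) (.inl hx.ne')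
  have hexp : HasDerivAt (fun x : ℝ => exp (-x)) (-exp (-x)) x := by
    simpa using (hasDerivAt_neg x).exp
  refine (hzpow.mul (hrpow.mul hexp)).congr_deriv ?_
  have hj : (x - α) ^ j = (x - α) ^ (j - 1) * (x - α) := by
    rw [← zpow_add_one₀ hxα, sub_add_cancel]
  simp only [shiftedGammaIntegrand, Pi.mul_apply, rpow_add_one hx.ne', zpow_add_one₀ hxα, hj]
  ring

theorem shiftedGammaMoment_add_one (hα : α < 0) (hβ : -1 < β) (j : ℤ) :
    shiftedGammaMoment α β (j + 1) =
      (j + β + 1 - α) * shiftedGammaMoment α β j + j * α * shiftedGammaMoment α β (j - 1) := by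
  have hint : ∀ i, IntegrableOn (shiftedGammaIntegrand α β i) (Ioi 0) :=
    integrableOn_shiftedGammaIntegrand hα hβ
  have hderiv : ∀ x ∈ Ioi (0 : ℝ), HasDerivAt (shiftedGammaIntegrand α (β + 1) j)
      ((j + β + 1 - α) * shiftedGammaIntegrand α β j x
        + j * α * shiftedGammaIntegrand α β (j - 1) x - shiftedGammaIntegrand α β (j + 1) x) x :=
    fun x (hx : 0 < x) => hasDerivAt_shiftedGammaIntegrand_add_one hx (by linarith) j
  have hcont : ContinuousWithinAt (shiftedGammaIntegrand α (β + 1) j) (Ici 0) 0 := by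
    unfold shiftedGammaIntegrand
    fun_prop (disch := first | exact Or.inl (by linarith) | exact Or.inr (by linarith))
  have hzero : shiftedGammaIntegrand α (β + 1) j 0 = 0 := by
    simp [shiftedGammaIntegrand, zero_rpow (by linarith : β + 1 ≠ 0)]
  have hA := (hint j).const_mul (j + β + 1 - α)
  have hB := (hint (j - 1)).const_mul (j * α)
  have hC := hint (j + 1)
  have hFTC := integral_Ioi_of_hasDerivAt_of_tendsto hcont hderiv ((hA.add hB).sub hC)
    (tendsto_zero_of_hasDerivAt_of_integrableOn_Ioi hderiv ((hA.add hB).sub hC)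
      (integrableOn_shiftedGammaIntegrand hα (by linarith) j))
  rw [hzero, sub_zero, integral_sub _ hC, integral_add hA hB, integral_const_mul,
    integral_const_mul] at hFTC
  · unfold shiftedGammaMoment
    linarith
  · exact hA.add hB

end

/-- The adjusted moments of the Type III `X₁`-Laguerre weight (`-1 < α < 0`) satisfy
`μ̃_{k+2} = k μ̃_{k+1} - α(1-k) μ̃_k`. -/
theorem typeIII_moment_recursion (α : ℝ) (h1 : -1 < α) (h2 : α < 0) (μ : ℕ → ℝ)
    (hμ : ∀ k : ℕ, μ k = ∫ x in Set.Ioi (0 : ℝ),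
      (x - α) ^ k * (x ^ α * Real.exp (-x) / (x - α) ^ 2)) :
    ∀ k : ℕ, μ (k + 2) = (k : ℝ) * μ (k + 1) - α * (1 - (k : ℝ)) * μ k := by
  have hμ_moment (k : ℕ) : μ k = shiftedGammaMoment α α (k - 2) := by
    refine (hμ k).trans (setIntegral_congr_fun measurableSet_Ioi fun x (hx : 0 < x) => ?_)
    have hxα : x - α ≠ 0 := by linarith
    rw [shiftedGammaIntegrand, zpow_sub₀ hxα, zpow_natCast, zpow_two]
    ring
  intro k
  have hk : ((k + 2 : ℕ) : ℤ) - 2 = k - 1 + 1 ∧ ((k + 1 : ℕ) : ℤ) - 2 = k - 1 ∧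
      (k : ℤ) - 2 = k - 1 - 1 := by omega
  rw [hμ_moment, hμ_moment, hμ_moment, hk.1, hk.2.1, hk.2.2, shiftedGammaMoment_add_one h2 h1]
  push_cast
  ring
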